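/- Let DG be a 2-dimensional digraph (a finite directed graph with edge set E = E_1 ⊔ E_2 and a bijection φ on bicolored paths of length two satisfying (F1)). Then every equivalence class (under the relation generated by diverting over φ) of a path containing m edges of color 1 and n edges of color 2 has a representative path in which all m edges of color 2 appear first (nearest the origin), followed by all edges of color 1. -/

import Mathlib

def IsDiPath {V E : Type} (o t : E → V) (A : List E) : Prop :=
  A.Chain' (fun x y => t x = o y)

def Diverts {V E : Type} (o t : E → V) {k : ℕ} (color : E → Fin k)
    (φ : E × E → E × E) (A A' : List E) : Prop :=
  ∃ (p s : List E) (x y : E), t x = o y ∧ color x ≠ color y ∧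
    A = p ++ x :: y :: s ∧ A' = p ++ (φ (x, y)).1 :: (φ (x, y)).2 :: s

def DivEquiv {V E : Type} (o t : E → V) {k : ℕ} (color : E → Fin k)
    (φ : E × E → E × E) (A A' : List E) : Prop :=
  A = A' ∨ Relation.TransGen (Diverts o t color φ) A A'

def F1 {V E : Type} (o t : E → V) {k : ℕ} (color : E → Fin k)
    (φ : E × E → E × E) : Prop :=
  ∀ x y : E, t x = o y → color x ≠ color y →
    color (φ (x, y)).1 = color y ∧ color (φ (x, y)).2 = color x ∧
    o (φ (x, y)).1 = o x ∧ t (φ (x, y)).2 = t y ∧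
    t (φ (x, y)).1 = o (φ (x, y)).2 ∧
    φ ((φ (x, y)).1, (φ (x, y)).2) = (x, y)

/-! Induct on the number of inversions of the colour word, i.e. of pairs of edges with colour `0`
before colour `1`. A path that is not yet of the form (colour `1`)(colour `0`) has two adjacent edges
coloured `0`, `1`; by (F1), diverting them yields a path again, with the two colours swapped in place,
which removes exactly one inversion. -/

def inversions : List (Fin 2) → ℕ
  | [] => 0
  | c :: l => (if c = 0 then l.count 1 else 0) + inversions l

lemma inversions_append_swap_lt (p s : List (Fin 2)) :
    inversions (p ++ 1 :: 0 :: s) < inversions (p ++ 0 :: 1 :: s) := by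
  induction p with
  | nil => simp [inversions]
  | cons a p ih => simpa [inversions, List.count_append, List.count_cons] using ih

lemma exists_sorted_or_exists_adjacent_inversion {E : Type} (color : E → Fin 2) (l : List E) :
    (∃ B C, l = B ++ C ∧ (∀ e ∈ B, color e = 1) ∧ (∀ e ∈ C, color e = 0)) ∨
      ∃ p s x y, l = p ++ x :: y :: s ∧ color x = 0 ∧ color y = 1 := by
  induction l with
  | nil => exact .inl ⟨[], [], rfl, by simp, by simp⟩
  | cons a l ih =>
    rcases ih with ⟨B, C, rfl, hB, hC⟩ | ⟨p, s, x, y, rfl, hx, hy⟩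
    · obtain ha | ha : color a = 0 ∨ color a = 1 := by omega
      · cases B with
        | nil => exact .inl ⟨[], a :: C, rfl, by simp, by simp_all⟩
        | cons b B => exact .inr ⟨[], B ++ C, a, b, rfl, ha, hB b (by simp)⟩
      · exact .inl ⟨a :: B, C, rfl, by simp_all, hC⟩
    · exact .inr ⟨a :: p, s, x, y, rfl, hx, hy⟩

lemma isDiPath_iff {V E : Type} {o t : E → V} {A : List E} :
    IsDiPath o t A ↔ A.IsChain (fun x y => t x = o y) :=
  Iff.rfl

lemma IsDiPath.replace_pair {V E : Type} {o t : E → V} {p s : List E} {x y x' y' : E}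
    (h : IsDiPath o t (p ++ x :: y :: s)) (ho : o x' = o x) (hxy : t x' = o y')
    (ht : t y' = t y) : IsDiPath o t (p ++ x' :: y' :: s) := by
  rw [isDiPath_iff] at h ⊢
  simp only [List.isChain_append, List.isChain_cons, List.head?_cons] at h ⊢
  grind

lemma divEquiv_iff_reflTransGen {V E : Type} {o t : E → V} {k : ℕ} {color : E → Fin k}
    {φ : E × E → E × E} {A A' : List E} :
    DivEquiv o t color φ A A' ↔ Relation.ReflTransGen (Diverts o t color φ) A A' := by
  rw [DivEquiv, Relation.reflTransGen_iff_eq_or_transGen, eq_comm]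

lemma F1.exists_diverts_of_adjacent_inversion {V E : Type} {o t : E → V} {color : E → Fin 2}
    {φ : E × E → E × E} (hF1 : F1 o t color φ) {p s : List E} {x y : E}
    (hA : IsDiPath o t (p ++ x :: y :: s)) (hx : color x = 0) (hy : color y = 1) :
    ∃ A', Diverts o t color φ (p ++ x :: y :: s) A' ∧ IsDiPath o t A' ∧
      inversions (A'.map color) < inversions ((p ++ x :: y :: s).map color) := by
  have hxy : t x = o y := (List.isChain_append_cons_cons.1 hA).2.1
  have hne : color x ≠ color y := by simp [hx, hy]
  obtain ⟨hc₁, hc₂, ho, ht, hmid, -⟩ := hF1 x y hxy hne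
  refine ⟨p ++ (φ (x, y)).1 :: (φ (x, y)).2 :: s, ⟨p, s, x, y, hxy, hne, rfl, rfl⟩,
    hA.replace_pair ho hmid ht, ?_⟩
  simpa [hc₁, hc₂, hx, hy] using inversions_append_swap_lt (p.map color) (s.map color)

theorem exists_divEquiv_sorted {V E : Type} {o t : E → V} {color : E → Fin 2}
    {φ : E × E → E × E} (hF1 : F1 o t color φ) (A : List E) (hA : IsDiPath o t A) :
    ∃ B C : List E, Relation.ReflTransGen (Diverts o t color φ) A (B ++ C) ∧
      (∀ e ∈ B, color e = 1) ∧ (∀ e ∈ C, color e = 0) := by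
  induction h : inversions (A.map color) using Nat.strong_induction_on generalizing A with
  | _ n ih =>
    rcases exists_sorted_or_exists_adjacent_inversion color A with
      ⟨B, C, rfl, hB, hC⟩ | ⟨p, s, x, y, rfl, hx, hy⟩
    · exact ⟨B, C, .refl, hB, hC⟩
    · obtain ⟨A', hdiv, hA', hlt⟩ := hF1.exists_diverts_of_adjacent_inversion hA hx hy
      obtain ⟨B, C, hequiv, hB, hC⟩ := ih _ (h ▸ hlt) A' hA' rfl
      exact ⟨B, C, .head hdiv hequiv, hB, hC⟩

theorem stmt3_general {V E : Type} (o t : E → V)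
    (color : E → Fin 2) (φ : E × E → E × E) (hF1 : F1 o t color φ)
    (A : List E) (hA : IsDiPath o t A) :
    ∃ B C : List E, DivEquiv o t color φ A (B ++ C) ∧
      (∀ e ∈ B, color e = 1) ∧ (∀ e ∈ C, color e = 0) := by
  simpa only [divEquiv_iff_reflTransGen] using exists_divEquiv_sorted hF1 A hA

/-- in a 2-dimensional digraph (colours `0` for `E₁` and `1`
for `E₂`), every path is equivalent (under the relation generated by
diverting over `φ`) to a path in which all edges of colour `1` (i.e. of
`E₂`) appear first, nearest the origin, followed by all edges of colour
`0` (i.e. of `E₁`). -/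
theorem stmt3 {V E : Type} [Fintype V] [Fintype E] (o t : E → V)
    (color : E → Fin 2) (φ : E × E → E × E) (hF1 : F1 o t color φ)
    (A : List E) (hA : IsDiPath o t A) :
    ∃ B C : List E, DivEquiv o t color φ A (B ++ C) ∧
      (∀ e ∈ B, color e = 1) ∧ (∀ e ∈ C, color e = 0) :=
  stmt3_general o t color φ hF1 A hA
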